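/- Assume there exists δ ∈ (0,1) such that D(u) = 0 for every u ∈ (0,δ). Then 𝓛_Q = {X | ∫_{(0,1)} |F^←_X(u)| dQ(u) < ∞}, and ϱ_Q is finite, i.e., ϱ_Q[X] ∈ ℝ for every X ∈ 𝓛_Q. -/

import Mathlib

open MeasureTheory

/-- The distribution function `F_X(x) = P[X ≤ x]` of a random variable `X`. -/
noncomputable def distFun {Ω : Type*} [MeasurableSpace Ω] (P : Measure Ω) (X : Ω → ℝ) (x : ℝ) : ℝ :=
  (P {ω | X ω ≤ x}).toReal

/-- The (lower) quantile function `F^←_X(u) = inf {x | F_X(x) ≥ u}`. -/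
noncomputable def quantile {Ω : Type*} [MeasurableSpace Ω] (P : Measure Ω) (X : Ω → ℝ) (u : ℝ) : ℝ :=
  sInf {x : ℝ | u ≤ distFun P X x}

/-- A distortion function: an increasing, right-continuous `D : [0,1] → [0,1]`
with `D 0 = 0` and `sup_{u ∈ (0,1)} D u = 1`. -/
structure IsDistortion (D : ℝ → ℝ) : Prop where
  mapsTo : ∀ u ∈ Set.Icc (0:ℝ) 1, D u ∈ Set.Icc (0:ℝ) 1
  mono : ∀ ⦃a b : ℝ⦄, 0 ≤ a → a ≤ b → b ≤ 1 → D a ≤ D b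
  rightCont : ∀ u ∈ Set.Ico (0:ℝ) 1, ContinuousWithinAt D (Set.Icc u 1) u
  zero : D 0 = 0
  sup_one : sSup (D '' Set.Ioo 0 1) = 1

/-- `Q` is the probability measure on the Borel sets of `(0,1)` corresponding to
the distortion function `D`, i.e. `Q (a,b] = D b - D a` for `0 < a ≤ b < 1`. -/
def IsCorresponding (D : ℝ → ℝ) (Q : Measure ℝ) : Prop :=
  IsProbabilityMeasure Q ∧ Q (Set.Ioo (0:ℝ) 1) = 1 ∧
    ∀ a b : ℝ, 0 < a → a ≤ b → b < 1 → Q (Set.Ioc a b) = ENNReal.ofReal (D b - D a)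

/-- `X ∈ 𝓛_Q`, i.e. `∫_{(0,1)} (F^←_X(u))⁺ dQ(u) < ∞`. -/
def memLQ {Ω : Type*} [MeasurableSpace Ω] (P : Measure Ω) (Q : Measure ℝ) (X : Ω → ℝ) : Prop :=
  ∫⁻ u in Set.Ioo (0:ℝ) 1, ENNReal.ofReal (max (quantile P X u) 0) ∂Q < ⊤

/-- The quantile risk measure
`ϱ_Q[X] = ∫_{(0,1)} (F^←_X(u))⁺ dQ(u) - ∫_{(0,1)} (F^←_X(u))⁻ dQ(u)`, with values in `EReal`. -/
noncomputable def rho {Ω : Type*} [MeasurableSpace Ω] (P : Measure Ω) (Q : Measure ℝ)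
    (X : Ω → ℝ) : EReal :=
  ((∫⁻ u in Set.Ioo (0:ℝ) 1, ENNReal.ofReal (max (quantile P X u) 0) ∂Q) : EReal)
    - ((∫⁻ u in Set.Ioo (0:ℝ) 1, ENNReal.ofReal (max (-(quantile P X u)) 0) ∂Q) : EReal)

/-!
Below `δ` the distortion `D` is flat, so `Q` does not charge `(0, δ/2]`; on the rest of `(0,1)`
the quantile function is bounded below by its value at `δ/2`, since it is monotone there. Hence the
negative part of `F^←_X` has a finite `Q`-integral, which makes `𝓛_Q` the set of `Q`-integrable
quantile functions and `ϱ_Q` a difference of two finite numbers.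
-/

open ProbabilityTheory Set
open scoped ENNReal

section LowerBounded

variable {α : Type*} [MeasurableSpace α] {μ : Measure α} [IsFiniteMeasure μ] {f : α → ℝ} {c : ℝ}

lemma lintegral_ofReal_max_neg_zero_lt_top (hf : ∀ᵐ x ∂μ, c ≤ f x) :
    ∫⁻ x, ENNReal.ofReal (max (-f x) 0) ∂μ < ∞ := by
  refine (lintegral_mono_ae (g := fun _ => ENNReal.ofReal (max (-c) 0)) ?_).trans_lt
    (lintegral_const_lt_top ENNReal.ofReal_ne_top)
  filter_upwards [hf] with x hx
  exact ENNReal.ofReal_le_ofReal (max_le_max (neg_le_neg hx) le_rfl)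

lemma lintegral_ofReal_abs_lt_top_iff (hf : ∀ᵐ x ∂μ, c ≤ f x) :
    ∫⁻ x, ENNReal.ofReal |f x| ∂μ < ∞ ↔ ∫⁻ x, ENNReal.ofReal (max (f x) 0) ∂μ < ∞ := by
  refine ⟨fun h => (lintegral_mono fun x => ?_).trans_lt h, fun h => ?_⟩
  · exact ENNReal.ofReal_le_ofReal (max_le (le_abs_self _) (abs_nonneg _))
  -- `f` need not be measurable, so `|f|` is bounded by `f⁺` plus a constant instead of being
  -- split as `f⁺ + f⁻`.
  have habs : ∀ᵐ x ∂μ, ENNReal.ofReal |f x|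
      ≤ ENNReal.ofReal (max (f x) 0) + ENNReal.ofReal (max (-c) 0) := by
    filter_upwards [hf] with x hx
    rw [← ENNReal.ofReal_add (le_max_right _ _) (le_max_right _ _)]
    refine ENNReal.ofReal_le_ofReal (abs_le.2 ⟨?_, ?_⟩) <;>
      linarith [le_max_left (f x) 0, le_max_right (f x) 0, le_max_left (-c) 0, le_max_right (-c) 0]
  calc ∫⁻ x, ENNReal.ofReal |f x| ∂μ
      ≤ ∫⁻ x, ENNReal.ofReal (max (f x) 0) + ENNReal.ofReal (max (-c) 0) ∂μ :=
        lintegral_mono_ae habs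
    _ = ∫⁻ x, ENNReal.ofReal (max (f x) 0) ∂μ + ∫⁻ _, ENNReal.ofReal (max (-c) 0) ∂μ :=
        lintegral_add_right _ measurable_const
    _ < ∞ := ENNReal.add_lt_top.2 ⟨h, lintegral_const_lt_top ENNReal.ofReal_ne_top⟩

end LowerBounded

lemma exists_real_eq_coe_ennreal_sub {a b : ℝ≥0∞} (ha : a ≠ ∞) (hb : b ≠ ∞) :
    ∃ r : ℝ, (a : EReal) - b = r :=
  ⟨a.toReal - b.toReal, by
    rw [EReal.coe_sub, EReal.coe_ennreal_toReal ha, EReal.coe_ennreal_toReal hb]⟩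

lemma bddBelow_setOf_le_cdf (μ : Measure ℝ) [IsProbabilityMeasure μ] {u : ℝ} (hu : 0 < u) :
    BddBelow {x | u ≤ cdf μ x} := by
  obtain ⟨x₀, hx₀⟩ := ((tendsto_cdf_atBot μ).eventually_lt_const hu).exists
  refine ⟨x₀, fun x hx => ?_⟩
  by_contra! hlt
  exact (hx.trans ((cdf μ).mono hlt.le)).not_gt hx₀

lemma nonempty_setOf_le_cdf (μ : Measure ℝ) [IsProbabilityMeasure μ] {v : ℝ} (hv : v < 1) :
    {x | v ≤ cdf μ x}.Nonempty :=
  ((tendsto_cdf_atTop μ).eventually_const_le hv).exists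

section Quantile

variable {Ω : Type*} [MeasurableSpace Ω] {P : Measure Ω} [IsProbabilityMeasure P] {X : Ω → ℝ}

lemma distFun_eq_cdf_map (hX : Measurable X) : distFun P X = cdf (P.map X) := by
  have := Measure.isProbabilityMeasure_map (μ := P) hX.aemeasurable
  ext x
  rw [cdf_eq_real, measureReal_def, Measure.map_apply hX measurableSet_Iic]
  rfl

lemma quantile_monotoneOn (hX : Measurable X) : MonotoneOn (quantile P X) (Ioo 0 1) := by
  intro u hu v hv huv
  have := Measure.isProbabilityMeasure_map (μ := P) hX.aemeasurable
  simp only [quantile, distFun_eq_cdf_map hX]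
  exact csInf_le_csInf (bddBelow_setOf_le_cdf _ hu.1) (nonempty_setOf_le_cdf _ hv.2)
    fun x hx => huv.trans hx

lemma ae_quantile_le_quantile (hX : Measurable X) {Q : Measure ℝ} {η : ℝ} (hη : η ∈ Ioo 0 1)
    (hQη : Q (Ioc 0 η) = 0) :
    ∀ᵐ u ∂Q.restrict (Ioo 0 1), quantile P X η ≤ quantile P X u := by
  rw [ae_restrict_iff' measurableSet_Ioo]
  filter_upwards [measure_eq_zero_iff_ae_notMem.1 hQη] with u hu hu01
  have hηu : η < u := lt_of_not_ge fun h => hu ⟨hu01.1, h⟩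
  exact quantile_monotoneOn hX hη hu01 hηu.le

end Quantile

lemma measure_Ioc_zero_eq_zero {μ : Measure ℝ} {b : ℝ}
    (h : ∀ a, 0 < a → a ≤ b → μ (Ioc a b) = 0) : μ (Ioc 0 b) = 0 := by
  rcases le_or_gt b 0 with hb | hb
  · rw [Ioc_eq_empty_of_le hb, measure_empty]
  have hcover : Ioc 0 b ⊆ ⋃ n : ℕ, Ioc (b / (n + 1)) b := fun x hx => by
    obtain ⟨n, hn⟩ := exists_nat_gt (b / x)
    rw [div_lt_iff₀ hx.1] at hn
    exact mem_iUnion.2 ⟨n, (div_lt_iff₀ (by positivity)).2 (by nlinarith [hx.1]), hx.2⟩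
  refine measure_mono_null hcover (measure_iUnion_null fun n => h _ (by positivity) ?_)
  exact div_le_self hb.le (by linarith [n.cast_nonneg (α := ℝ)])

lemma IsCorresponding.measure_Ioc_zero_eq_zero {D : ℝ → ℝ} {Q : Measure ℝ}
    (hQ : IsCorresponding D Q) {δ b : ℝ} (hδ : δ ≤ 1) (hD : ∀ u ∈ Ioo 0 δ, D u = 0)
    (hb : b < δ) : Q (Ioc 0 b) = 0 := by
  refine _root_.measure_Ioc_zero_eq_zero fun a ha hab => ?_
  rw [hQ.2.2 a b ha hab (hb.trans_le hδ), hD a ⟨ha, hab.trans_lt hb⟩,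
    hD b ⟨ha.trans_le hab, hb⟩, sub_self, ENNReal.ofReal_zero]

theorem memLQ_iff_abs_and_rho_finite_of_vanishing_general {Ω : Type*} [MeasurableSpace Ω]
    (P : Measure Ω) [IsProbabilityMeasure P] (D : ℝ → ℝ) (Q : Measure ℝ)
    (hQ : IsCorresponding D Q)
    (δ : ℝ) (hδ : δ ∈ Set.Ioo (0:ℝ) 1) (hDzero : ∀ u ∈ Set.Ioo (0:ℝ) δ, D u = 0) :
    ∀ X : Ω → ℝ, Measurable X →
      (memLQ P Q X ↔ ∫⁻ u in Set.Ioo (0:ℝ) 1, ENNReal.ofReal |quantile P X u| ∂Q < ⊤) ∧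
      (memLQ P Q X → ∃ r : ℝ, rho P Q X = (r : EReal)) := by
  intro X hX
  have := hQ.1
  have hnull : Q (Ioc 0 (δ / 2)) = 0 :=
    hQ.measure_Ioc_zero_eq_zero hδ.2.le hDzero (by linarith [hδ.1])
  have hbdd : ∀ᵐ u ∂Q.restrict (Ioo 0 1), quantile P X (δ / 2) ≤ quantile P X u :=
    ae_quantile_le_quantile hX ⟨by linarith [hδ.1], by linarith [hδ.2]⟩ hnull
  refine ⟨(lintegral_ofReal_abs_lt_top_iff hbdd).symm, fun hpos => ?_⟩
  exact exists_real_eq_coe_ennreal_sub hpos.ne (lintegral_ofReal_max_neg_zero_lt_top hbdd).ne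

/-- If `D` vanishes on `(0,δ)` for some `δ ∈ (0,1)`, then
`𝓛_Q = {X | ∫_{(0,1)} |F^←_X(u)| dQ(u) < ∞}` and `ϱ_Q` is finite on `𝓛_Q`. -/
theorem memLQ_iff_abs_and_rho_finite_of_vanishing {Ω : Type*} [MeasurableSpace Ω]
    (P : Measure Ω) [IsProbabilityMeasure P] (D : ℝ → ℝ) (Q : Measure ℝ)
    (hD : IsDistortion D) (hQ : IsCorresponding D Q)
    (δ : ℝ) (hδ : δ ∈ Set.Ioo (0:ℝ) 1) (hDzero : ∀ u ∈ Set.Ioo (0:ℝ) δ, D u = 0) :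
    ∀ X : Ω → ℝ, Measurable X →
      (memLQ P Q X ↔ ∫⁻ u in Set.Ioo (0:ℝ) 1, ENNReal.ofReal |quantile P X u| ∂Q < ⊤) ∧
      (memLQ P Q X → ∃ r : ℝ, rho P Q X = (r : EReal)) :=
  memLQ_iff_abs_and_rho_finite_of_vanishing_general P D Q hQ δ hδ hDzero
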